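/- arXiv:2310.14988 — 2 statements merged into one kernel-verified Lean document; each statement's English description precedes it below -/
import Mathlib

section
/- Let W be the right-angled Coxeter group of a finite simple graph Γ, let Λ ⊆ Γ be an induced subgraph and g ∈ W an element such that g W_{Λ ∪ Link(Λ)} g⁻¹ ⊇ W_Λ. Write g = g₁ g₂ g₃ with g₁ ∈ W_Λ, g₃ ∈ W_{Λ∪Link(Λ)} and g₂ having no letters from Λ at the start and no letters from Λ ∪ Link(Λ) at the end. Then g₂ ∈ W_{Link(Λ ∪ Link(Λ))} and hence g ∈ W_{Λ ∪ Link(Λ)}. -/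
def racgRels {V : Type*} (G : SimpleGraph V) : Set (FreeGroup V) :=
  {r | (∃ v, r = FreeGroup.of v * FreeGroup.of v) ∨
    ∃ u v, G.Adj u v ∧ r = FreeGroup.of u * FreeGroup.of v * FreeGroup.of u * FreeGroup.of v}

abbrev RACG {V : Type*} (G : SimpleGraph V) : Type _ := PresentedGroup (racgRels G)

def racgGen {V : Type*} (G : SimpleGraph V) (v : V) : RACG G := PresentedGroup.of v

def specialSubgroup {V : Type*} (G : SimpleGraph V) (S : Set V) : Subgroup (RACG G) :=
  Subgroup.closure (racgGen G '' S)

def linkSet {V : Type*} (G : SimpleGraph V) (S : Set V) : Set V :=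
  {u | ∀ s ∈ S, G.Adj u s}

noncomputable def wordLength {V : Type*} (G : SimpleGraph V) (g : RACG G) : ℕ :=
  sInf {n | ∃ l : List V, l.length = n ∧ (l.map (racgGen G)).prod = g}

lemma racgGen_sq {V : Type*} (G : SimpleGraph V) (v : V) :
    racgGen G v * racgGen G v = 1 := by
  have h : (QuotientGroup.mk (FreeGroup.of v * FreeGroup.of v) :
      PresentedGroup (racgRels G)) = 1 := by
    rw [QuotientGroup.eq_one_iff]
    exact Subgroup.subset_normalClosure (Or.inl ⟨v, rfl⟩)
  simp only [racgGen, PresentedGroup.of, ← map_mul]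
  exact h

lemma racgGen_comm {V : Type*} (G : SimpleGraph V) {u v : V} (h : G.Adj u v) :
    racgGen G u * racgGen G v * racgGen G u * racgGen G v = 1 := by
  have h' : (QuotientGroup.mk (FreeGroup.of u * FreeGroup.of v * FreeGroup.of u * FreeGroup.of v) :
      PresentedGroup (racgRels G)) = 1 := by
    rw [QuotientGroup.eq_one_iff]
    exact Subgroup.subset_normalClosure (Or.inr ⟨u, v, h, rfl⟩)
  simp only [racgGen, PresentedGroup.of, ← map_mul]
  exact h'

lemma racg_induce_lift {V : Type*} (G : SimpleGraph V) {S : Set V} {H : Type*} [Group H]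
    (f : S → H) (hsq : ∀ v : S, f v * f v = 1)
    (hcomm : ∀ u v : S, G.Adj ↑u ↑v → f u * f v * f u * f v = 1) :
    ∀ r ∈ racgRels (G.induce S), FreeGroup.lift f r = 1 := by
  rintro r (⟨v, rfl⟩ | ⟨u, v, hadj, rfl⟩)
  · simpa [map_mul] using hsq v
  · have h' : G.Adj ↑u ↑v := hadj
    simpa [map_mul] using hcomm u v h'

/-- The canonical homomorphism between special subgroups induced by an inclusion of
vertex sets. -/
def racgMapHom {V : Type*} (G : SimpleGraph V) {S T : Set V} (h : S ⊆ T) :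
    RACG (G.induce S) →* RACG (G.induce T) :=
  PresentedGroup.toGroup (f := fun v : S => racgGen (G.induce T) ⟨v.1, h v.2⟩)
    (racg_induce_lift G _
      (fun v => racgGen_sq _ _)
      (fun u v hadj => racgGen_comm (G.induce T) (by exact hadj)))

/-- The canonical homomorphism from the special subgroup on `S` to the full
right-angled Coxeter group. -/
def racgInclHom {V : Type*} (G : SimpleGraph V) (S : Set V) :
    RACG (G.induce S) →* RACG G :=
  PresentedGroup.toGroup (f := fun v : S => racgGen G ↑v)
    (racg_induce_lift G _
      (fun v => racgGen_sq _ _)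
      (fun u v hadj => racgGen_comm G hadj))

/-!
Write `T = Λ ∪ Link Λ`. The hypotheses give `g₂⁻¹ a g₂ ∈ W_T` for every `a ∈ Λ`. The retraction
`W → W_T` killing the generators outside `T` fixes this element, which shows `g₂ = z r` with
`r ∈ W_T` and `z` commuting with `a`. The centraliser of a generator `a` lies in `W_{St a}`,
`St a = {a} ∪ Link a`; this is the Coxeter-theoretic core, and it rests on the fact that two distinct
left descents of an element are adjacent (exchange condition, minimal coset representatives, and
the infinite dihedral group). Hence a last letter `b` of `g₂` lies in `St a ∪ T` for every `a ∈ Λ`;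
as no letter of `T` ends `g₂`, this forces `b ∈ Link Λ ⊆ T`, a contradiction. So `g₂ = 1`.
-/

theorem Subgroup.conj_mem_of_le_map_conj {H : Type*} [Group H] {K L : Subgroup H}
    {g g₁ g₂ g₃ : H} (hle : K ≤ L.map (MulAut.conj g).toMonoidHom) (hg : g = g₁ * g₂ * g₃)
    (hg₁ : g₁ ∈ K) (hg₃ : g₃ ∈ L) {x : H} (hx : x ∈ K) : g₂⁻¹ * x * g₂ ∈ L := by
  obtain ⟨t, ht, hgt⟩ := hle (mul_mem (mul_mem hg₁ hx) (inv_mem hg₁))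
  have hgt' : g * t * g⁻¹ = g₁ * x * g₁⁻¹ := hgt
  have : g₂⁻¹ * x * g₂ = g₃ * t * g₃⁻¹ :=
    calc g₂⁻¹ * x * g₂ = g₂⁻¹ * g₁⁻¹ * (g₁ * x * g₁⁻¹) * g₁ * g₂ := by group
      _ = g₃ * t * g₃⁻¹ := by rw [← hgt', hg]; group
  exact this ▸ mul_mem (mul_mem hg₃ ht) (inv_mem hg₃)

namespace CoxeterSystem

variable {B W : Type*} [Group W] {M : CoxeterMatrix B} (cs : CoxeterSystem M W)

theorem IsReduced.isChain_ne {ω : List B} (hω : cs.IsReduced ω) : ω.IsChain (· ≠ ·) := by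
  induction ω with
  | nil => exact .nil
  | cons i ω ih =>
    cases ω with
    | nil => exact .singleton i
    | cons j ω =>
      refine List.isChain_cons_cons.mpr ⟨?_, ih (by simpa using hω.drop 1)⟩
      rintro rfl
      have h := cs.length_wordProd_le ω
      rw [← cs.simple_mul_simple_cancel_left (w := cs.wordProd ω) i, ← wordProd_cons,
        ← wordProd_cons, hω.eq] at h
      simp at h

theorem isLeftDescent_of_isLeftDescent_mul_simple {w : W} {i j : B} (hi : cs.IsRightDescent w i)
    (hj : cs.IsLeftDescent (w * cs.simple i) j) : cs.IsLeftDescent w j := by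
  have := cs.length_mul_simple (cs.simple j * w) i
  simp only [IsLeftDescent, IsRightDescent, mul_assoc] at hi hj this ⊢
  omega

theorem rightInvSeq_append (ω ω' : List B) :
    cs.rightInvSeq (ω ++ ω') =
      (cs.rightInvSeq ω).map (MulAut.conj (cs.wordProd ω')⁻¹) ++ cs.rightInvSeq ω' := by
  induction ω with
  | nil => simp
  | cons i ω ih => simp [rightInvSeq, ih, wordProd_append, mul_assoc]

end CoxeterSystem

section ReflectionCocycle

open scoped Classical

variable {W : Type*} [Group W]

lemma mul_mul_eq_iff_of_mul_self {s : W} (hs : s * s = 1) {t u : W} :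
    s * t * s = u ↔ t = s * u * s := by
  constructor <;> rintro rfl <;> simp [← mul_assoc, hs, mul_assoc _ s s]

/- Tits' construction: along a word for `w`, the second coordinate counts the occurrences of `t`
in the right inversion sequence modulo `2`, so this parity depends only on `w`. -/
noncomputable def reflectionCocycleGen (s : W) (hs : s * s = 1) : Equiv.Perm (W × ZMod 2) :=
  Function.Involutive.toPerm (fun p => (s * p.1 * s, p.2 + if p.1 = s then 1 else 0)) <| by
    rintro ⟨t, ε⟩
    have hsts : s * t * s = s ↔ t = s := by rw [mul_mul_eq_iff_of_mul_self hs, hs, one_mul]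
    simp only [Prod.mk.injEq, if_congr hsts rfl rfl, add_assoc]
    refine ⟨by simp [← mul_assoc, hs, mul_assoc _ s s], ?_⟩
    split_ifs <;> decide +revert

lemma reflectionCocycleGen_apply {s : W} (hs : s * s = 1) (t : W) (ε : ZMod 2) :
    reflectionCocycleGen s hs (t, ε) = (s * t * s, ε + if t = s then 1 else 0) := rfl

lemma reflectionCocycleGen_mul_self {s : W} (hs : s * s = 1) :
    reflectionCocycleGen s hs * reflectionCocycleGen s hs = 1 :=
  Equiv.ext (Function.Involutive.toPerm_involutive _)

lemma commute_reflectionCocycleGen {s s' : W} (hs : s * s = 1) (hs' : s' * s' = 1)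
    (h : Commute s s') : Commute (reflectionCocycleGen s hs) (reflectionCocycleGen s' hs') := by
  ext ⟨t, ε⟩ : 1
  have h₁ : s' * s * s' = s := by rw [← h.eq, mul_assoc, hs', mul_one]
  have h₂ : s * s' * s = s' := by rw [h.eq, mul_assoc, hs, mul_one]
  simp only [Equiv.Perm.mul_apply, reflectionCocycleGen_apply, Prod.mk.injEq]
  constructor
  · calc s * (s' * t * s') * s = s * s' * t * (s' * s) := by group
      _ = s' * s * t * (s * s') := by rw [h.eq]
      _ = s' * (s * t * s) * s' := by group
  · simp only [mul_mul_eq_iff_of_mul_self hs, mul_mul_eq_iff_of_mul_self hs', h₁, h₂]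
    ring

end ReflectionCocycle

namespace RACG

open CoxeterSystem

variable {V : Type*} (G : SimpleGraph V)

lemma racgGen_inv (v : V) : (racgGen G v)⁻¹ = racgGen G v :=
  inv_eq_of_mul_eq_one_right (racgGen_sq G v)

lemma commute_racgGen {u v : V} (h : G.Adj u v) : Commute (racgGen G u) (racgGen G v) :=
  calc racgGen G u * racgGen G v
      = (racgGen G u * racgGen G v)⁻¹ :=
        eq_inv_of_mul_eq_one_left (by simpa only [mul_assoc] using racgGen_comm G h)
    _ = racgGen G v * racgGen G u := by rw [mul_inv_rev, racgGen_inv, racgGen_inv]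

def lift {H : Type*} [Group H] (f : V → H) (hsq : ∀ v, f v * f v = 1)
    (hcomm : ∀ u v, G.Adj u v → Commute (f u) (f v)) : RACG G →* H :=
  PresentedGroup.toGroup (f := f) <| by
    rintro r (⟨v, rfl⟩ | ⟨u, v, huv, rfl⟩)
    · simpa using hsq v
    · simp only [map_mul, FreeGroup.lift_apply_of]
      rw [(hcomm u v huv).eq, mul_assoc (f v), hsq, mul_one, hsq]

@[simp]
lemma lift_racgGen {H : Type*} [Group H] (f : V → H) (hsq : ∀ v, f v * f v = 1)
    (hcomm : ∀ u v, G.Adj u v → Commute (f u) (f v)) (v : V) :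
    lift G f hsq hcomm (racgGen G v) = f v :=
  PresentedGroup.toGroup.of _

open scoped Classical in
noncomputable def coxeterMatrix : CoxeterMatrix V where
  M := Matrix.of fun i j => if i = j then 1 else if G.Adj i j then 2 else 0
  isSymm := by
    ext i j
    simp only [Matrix.transpose_apply, Matrix.of_apply, eq_comm (a := i), G.adj_comm]
  diagonal i := by simp
  off_diagonal i j h := by simp only [Matrix.of_apply, h, if_false]; split_ifs <;> simp

lemma normalClosure_racgRels :
    Subgroup.normalClosure (racgRels G) =
      Subgroup.normalClosure (coxeterMatrix G).relationsSet := by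
  apply le_antisymm <;> apply Subgroup.normalClosure_le_normal
  · rintro r (⟨v, rfl⟩ | ⟨u, v, huv, rfl⟩) <;> apply Subgroup.subset_normalClosure
    · exact ⟨(v, v), by simp [CoxeterMatrix.relation, coxeterMatrix]⟩
    · refine ⟨(u, v), ?_⟩
      simp [CoxeterMatrix.relation, coxeterMatrix, huv.ne, huv, pow_two, mul_assoc]
  · rintro r ⟨⟨u, v⟩, rfl⟩
    simp only [Function.uncurry_apply_pair, CoxeterMatrix.relation, coxeterMatrix, Matrix.of_apply]
    split_ifs with h huv
    · subst h; exact Subgroup.subset_normalClosure (Or.inl ⟨u, by simp⟩)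
    · exact Subgroup.subset_normalClosure (Or.inr ⟨u, v, huv, by simp [pow_two, mul_assoc]⟩)
    · simp

noncomputable def coxeterSystem : CoxeterSystem (coxeterMatrix G) (RACG G) :=
  (coxeterMatrix G).toCoxeterSystem.map
    (QuotientGroup.quotientMulEquivOfEq (normalClosure_racgRels G).symm)

@[simp]
lemma coxeterSystem_simple : (coxeterSystem G).simple = racgGen G := rfl

local notation "cs" => coxeterSystem G

lemma wordProd_eq_prod (ω : List V) : (cs).wordProd ω = (ω.map (racgGen G)).prod := by
  simp [CoxeterSystem.wordProd]

lemma wordLength_eq_length (g : RACG G) : wordLength G g = (cs).length g := by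
  obtain ⟨ω, hω, rfl⟩ := (cs).exists_isReduced g
  apply le_antisymm
  · exact Nat.sInf_le ⟨ω, hω.symm, (wordProd_eq_prod G ω).symm⟩
  · refine le_csInf ⟨_, ω, rfl, (wordProd_eq_prod G ω).symm⟩ ?_
    rintro n ⟨l, rfl, hl⟩
    rw [← hl, ← wordProd_eq_prod]
    exact (cs).length_wordProd_le l

lemma specialSubgroup_mono {S T : Set V} (h : S ⊆ T) :
    specialSubgroup G S ≤ specialSubgroup G T :=
  Subgroup.closure_mono (Set.image_mono h)

lemma racgGen_mem_specialSubgroup {S : Set V} {v : V} (hv : v ∈ S) :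
    racgGen G v ∈ specialSubgroup G S :=
  Subgroup.subset_closure ⟨v, hv, rfl⟩

lemma wordProd_mem_specialSubgroup {S : Set V} {ω : List V} (hω : ∀ v ∈ ω, v ∈ S) :
    (cs).wordProd ω ∈ specialSubgroup G S := by
  rw [wordProd_eq_prod]
  refine Subgroup.list_prod_mem _ fun x hx => ?_
  obtain ⟨v, hv, rfl⟩ := List.mem_map.mp hx
  exact racgGen_mem_specialSubgroup G (hω v hv)

section Retraction

open scoped Classical

noncomputable def retraction (S : Set V) : RACG G →* RACG G :=
  lift G (fun v => if v ∈ S then racgGen G v else 1)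
    (fun v => by split_ifs <;> simp [racgGen_sq])
    (fun u v huv => by split_ifs <;> simp [commute_racgGen G huv])

lemma retraction_racgGen (S : Set V) (v : V) :
    retraction G S (racgGen G v) = if v ∈ S then racgGen G v else 1 :=
  lift_racgGen G _ _ _ v

lemma retraction_wordProd (S : Set V) (ω : List V) :
    retraction G S ((cs).wordProd ω) = (cs).wordProd (ω.filter (· ∈ S)) := by
  induction ω with
  | nil => simp
  | cons v ω ih =>
    by_cases hv : v ∈ S <;> simp [wordProd_cons, ih, retraction_racgGen, hv]

lemma retraction_eq_self {S : Set V} {x : RACG G} (hx : x ∈ specialSubgroup G S) :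
    retraction G S x = x := by
  have : specialSubgroup G S ≤ (retraction G S).eqLocus (MonoidHom.id _) := by
    rw [specialSubgroup, Subgroup.closure_le]
    rintro _ ⟨v, hv, rfl⟩
    show retraction G S (racgGen G v) = racgGen G v
    simp [retraction_racgGen, hv]
  exact this hx

lemma retraction_mem_specialSubgroup (S : Set V) (x : RACG G) :
    retraction G S x ∈ specialSubgroup G S := by
  obtain ⟨ω, -, rfl⟩ := (cs).exists_isReduced x
  rw [retraction_wordProd]
  exact wordProd_mem_specialSubgroup G fun v hv => by simpa using (List.mem_filter.mp hv).2

lemma length_retraction_le (S : Set V) (x : RACG G) :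
    (cs).length (retraction G S x) ≤ (cs).length x := by
  obtain ⟨ω, hω, rfl⟩ := (cs).exists_isReduced x
  rw [retraction_wordProd, hω.eq]
  exact ((cs).length_wordProd_le _).trans (List.length_filter_le _ _)

lemma exists_reduced_word_of_mem {S : Set V} {x : RACG G} (hx : x ∈ specialSubgroup G S) :
    ∃ ω : List V, (cs).IsReduced ω ∧ (∀ v ∈ ω, v ∈ S) ∧ (cs).wordProd ω = x := by
  obtain ⟨ω, hω, rfl⟩ := (cs).exists_isReduced x
  have hprod : (cs).wordProd (ω.filter (· ∈ S)) = (cs).wordProd ω := by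
    rw [← retraction_wordProd, retraction_eq_self G hx]
  refine ⟨ω.filter (· ∈ S), ?_, fun v hv => by simpa using (List.mem_filter.mp hv).2, hprod⟩
  refine le_antisymm ((cs).length_wordProd_le _) ?_
  rw [hprod, hω.eq]
  exact List.length_filter_le _ _

lemma mem_of_isRightDescent {S : Set V} {x : RACG G} (hx : x ∈ specialSubgroup G S) {b : V}
    (hb : (cs).IsRightDescent x b) : b ∈ S := by
  by_contra hbS
  have hret : retraction G S (x * racgGen G b) = x := by
    simp [retraction_racgGen, hbS, retraction_eq_self G hx]
  have := length_retraction_le G S (x * racgGen G b)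
  rw [hret] at this
  exact absurd hb (not_lt.mpr this)

end Retraction

section Dihedral

open scoped Classical

variable {a c : V}

/- `a` and `c` act as the reflections of `ℤ` in `-1/2` and `1/2`, so an alternating word of
length `n` moves `0` to `±n`. -/
noncomputable def dihedralRep (hac : ¬ G.Adj a c) : RACG G →* Equiv.Perm ℤ :=
  lift G (fun v => if v = a then Equiv.subLeft (-1) else if v = c then Equiv.subLeft 1 else 1)
    (fun v => by split_ifs <;> ext <;> simp)
    (fun u v huv => by
      have : ¬ ((u = a ∨ u = c) ∧ (v = a ∨ v = c)) := by
        rintro ⟨rfl | rfl, rfl | rfl⟩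
        exacts [huv.ne rfl, hac huv, hac huv.symm, huv.ne rfl]
      split_ifs <;> simp_all)

lemma dihedralRep_racgGen (hac : ¬ G.Adj a c) (v : V) :
    dihedralRep G hac (racgGen G v) =
      if v = a then Equiv.subLeft (-1) else if v = c then Equiv.subLeft 1 else 1 :=
  lift_racgGen G _ _ _ v

lemma dihedralRep_wordProd_cons (hac : ¬ G.Adj a c) (hne : a ≠ c) (v : V) (ω : List V)
    (hω : ∀ w ∈ v :: ω, w = a ∨ w = c) (hchain : (v :: ω).IsChain (· ≠ ·)) :
    dihedralRep G hac ((cs).wordProd (v :: ω)) 0 =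
      if v = a then -((ω.length : ℤ) + 1) else (ω.length : ℤ) + 1 := by
  induction ω generalizing v with
  | nil =>
    rcases hω v (by simp) with rfl | rfl <;> simp [dihedralRep_racgGen, hne.symm]
  | cons w ω ih =>
    have hvw := (List.isChain_cons_cons.mp hchain).1
    rw [wordProd_cons, map_mul, Equiv.Perm.mul_apply,
      ih w (fun u hu => hω u (List.mem_cons_of_mem v hu)) (List.isChain_cons_cons.mp hchain).2,
      coxeterSystem_simple, dihedralRep_racgGen]
    rcases hω v (by simp) with rfl | rfl <;> rcases hω w (by simp) with rfl | rfl <;>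
      simp_all [hne.symm] <;> ring

lemma length_eq_natAbs_dihedralRep (hac : ¬ G.Adj a c) (hne : a ≠ c) {x : RACG G}
    (hx : x ∈ specialSubgroup G {a, c}) :
    (cs).length x = (dihedralRep G hac x 0).natAbs := by
  obtain ⟨ω, hω, hωac, rfl⟩ := exists_reduced_word_of_mem G hx
  rw [hω.eq]
  cases ω with
  | nil => simp
  | cons v ω =>
    rw [dihedralRep_wordProd_cons G hac hne v ω (by simpa using hωac) hω.isChain_ne]
    split_ifs <;> simp <;> omega

lemma not_isLeftDescent_and_isLeftDescent (hac : ¬ G.Adj a c) (hne : a ≠ c) {x : RACG G}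
    (hx : x ∈ specialSubgroup G {a, c}) :
    ¬ ((cs).IsLeftDescent x a ∧ (cs).IsLeftDescent x c) := by
  rintro ⟨ha, hc⟩
  have hlen := fun v (hv : v ∈ ({a, c} : Set V)) => length_eq_natAbs_dihedralRep G hac hne
    (Subgroup.mul_mem _ (racgGen_mem_specialSubgroup G hv) hx)
  have hx' := length_eq_natAbs_dihedralRep G hac hne hx
  have ha' := hlen a (by simp)
  have hc' := hlen c (by simp)
  simp only [IsLeftDescent, coxeterSystem_simple] at ha hc
  simp only [map_mul, Equiv.Perm.mul_apply, dihedralRep_racgGen, if_pos, hne.symm,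
    if_false] at ha' hc'
  simp at ha' hc'
  omega

end Dihedral

section Exchange

open scoped Classical

noncomputable def reflectionCocycle : RACG G →* Equiv.Perm (RACG G × ZMod 2) :=
  lift G (fun v => reflectionCocycleGen (racgGen G v) (racgGen_sq G v))
    (fun _ => reflectionCocycleGen_mul_self _)
    (fun _ _ huv => commute_reflectionCocycleGen _ _ (commute_racgGen G huv))

lemma reflectionCocycle_wordProd (ω : List V) (t : RACG G) (ε : ZMod 2) :
    reflectionCocycle G ((cs).wordProd ω) (t, ε) =
      ((cs).wordProd ω * t * ((cs).wordProd ω)⁻¹, ε + ((cs).rightInvSeq ω).count t) := by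
  induction ω with
  | nil => simp
  | cons v ω ih =>
    have hconj : (cs).wordProd ω * t * ((cs).wordProd ω)⁻¹ = racgGen G v ↔
        ((cs).wordProd ω)⁻¹ * racgGen G v * (cs).wordProd ω = t := by
      constructor <;> intro h <;> rw [← h] <;> group
    rw [wordProd_cons, map_mul, Equiv.Perm.mul_apply, ih, coxeterSystem_simple, reflectionCocycle,
      lift_racgGen, reflectionCocycleGen_apply, if_congr hconj rfl rfl]
    simp only [rightInvSeq, List.count_cons, beq_iff_eq, coxeterSystem_simple, Prod.mk.injEq]
    constructor
    · simp [mul_assoc, racgGen_inv]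
    · push_cast
      ring

lemma count_rightInvSeq_congr {ω ω' : List V} (h : (cs).wordProd ω = (cs).wordProd ω')
    (t : RACG G) :
    ((((cs).rightInvSeq ω).count t : ℕ) : ZMod 2) = ((cs).rightInvSeq ω').count t := by
  have h₁ := reflectionCocycle_wordProd G ω t 0
  rw [h, reflectionCocycle_wordProd] at h₁
  simpa using (congrArg Prod.snd h₁).symm

theorem simple_mem_rightInvSeq {w : RACG G} {i : V} (hi : (cs).IsRightDescent w i)
    {ω : List V} (hω : (cs).wordProd ω = w) : (cs).simple i ∈ (cs).rightInvSeq ω := by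
  obtain ⟨ω₀, hω₀, h₀⟩ := (cs).exists_isReduced (w * (cs).simple i)
  have hnot : (cs).simple i ∉ (cs).rightInvSeq ω₀ := fun hmem => by
    have := ((cs).isRightInversion_of_mem_rightInvSeq hω₀ hmem).2
    rw [← h₀, simple_mul_simple_cancel_right] at this
    exact lt_asymm this hi
  have hnot' : (cs).simple i ∉ ((cs).rightInvSeq ω₀).map (MulAut.conj ((cs).simple i)) := by
    intro hmem
    obtain ⟨r, hr, hrs⟩ := List.mem_map.mp hmem
    have : r = (cs).simple i := (MulAut.conj ((cs).simple i)).injective (hrs.trans (by simp))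
    exact hnot (this ▸ hr)
  have hword : (cs).wordProd (ω₀.concat i) = w := by
    rw [wordProd_concat, ← h₀, simple_mul_simple_cancel_right]
  have hcount := count_rightInvSeq_congr G (hω.trans hword.symm) ((cs).simple i)
  rw [rightInvSeq_concat, List.concat_eq_append, List.count_append,
    List.count_eq_zero.mpr hnot'] at hcount
  by_contra hmem
  rw [List.count_eq_zero.mpr hmem] at hcount
  simp at hcount

end Exchange

lemma rightInvSeq_mem_specialSubgroup {S : Set V} {ω : List V} (hω : ∀ v ∈ ω, v ∈ S) :
    ∀ t ∈ (cs).rightInvSeq ω, t ∈ specialSubgroup G S := by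
  induction ω with
  | nil => simp
  | cons v ω ih =>
    have hπ := wordProd_mem_specialSubgroup G fun w hw => hω w (List.mem_cons_of_mem v hw)
    simp only [rightInvSeq, List.mem_cons, forall_eq_or_imp]
    refine ⟨?_, ih fun w hw => hω w (List.mem_cons_of_mem v hw)⟩
    exact Subgroup.mul_mem _ (Subgroup.mul_mem _ (Subgroup.inv_mem _ hπ)
      (racgGen_mem_specialSubgroup G (hω v (by simp)))) hπ

lemma exists_eq_racgGen_of_length_eq_one {S : Set V} {r : RACG G}
    (hr : r ∈ specialSubgroup G S) (h : (cs).length r = 1) : ∃ s ∈ S, r = racgGen G s := by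
  obtain ⟨ω, hω, hωS, rfl⟩ := exists_reduced_word_of_mem G hr
  rw [hω.eq] at h
  obtain ⟨s, rfl⟩ := List.length_eq_one_iff.mp h
  exact ⟨s, hωS s (by simp), by simp⟩

lemma isRightDescent_or_exists_mem_of_isRightDescent_mul {S : Set V} {y : RACG G}
    (hy : y ∈ specialSubgroup G S) (v : RACG G) {c : V} (h : (cs).IsRightDescent (y * v) c) :
    (cs).IsRightDescent v c ∨ ∃ r ∈ specialSubgroup G S, v * racgGen G c = r * v := by
  obtain ⟨ωy, -, hωyS, rfl⟩ := exists_reduced_word_of_mem G hy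
  obtain ⟨ω, hω, rfl⟩ := (cs).exists_isReduced v
  have hmem := simple_mem_rightInvSeq G h (wordProd_append ..)
  rw [rightInvSeq_append, List.mem_append, List.mem_map] at hmem
  rcases hmem with ⟨r, hr, hrc⟩ | hmem
  · refine .inr ⟨r, rightInvSeq_mem_specialSubgroup G hωyS r hr, ?_⟩
    rw [← coxeterSystem_simple, ← hrc, MulAut.conj_apply, inv_inv]
    group
  · exact .inl ((cs).isRightInversion_of_mem_rightInvSeq hω hmem).2

theorem length_mul_of_forall_not_isLeftDescent {S : Set V} {v : RACG G}
    (hv : ∀ s ∈ S, ¬ (cs).IsLeftDescent v s) {y : RACG G} (hy : y ∈ specialSubgroup G S) :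
    (cs).length (y * v) = (cs).length y + (cs).length v := by
  obtain ⟨n, hn⟩ : ∃ n, (cs).length v = n := ⟨_, rfl⟩
  induction n generalizing v y with
  | zero => simp [(cs).length_eq_zero_iff.mp hn]
  | succ n ih =>
    obtain ⟨c, hc⟩ := (cs).exists_rightDescent_of_ne_one (w := v) (by rintro rfl; simp at hn)
    obtain ⟨v₂, hv₂⟩ : ∃ v₂, v * racgGen G c = v₂ := ⟨_, rfl⟩
    have hvv₂ : v = v₂ * racgGen G c := by rw [← hv₂, mul_assoc, racgGen_sq, mul_one]
    have hlen₂ : (cs).length v₂ = n := by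
      have := (cs).isRightDescent_iff.mp hc
      rw [coxeterSystem_simple, hv₂] at this
      omega
    have ih₂ : ∀ y ∈ specialSubgroup G S, (cs).length (y * v₂) = (cs).length y + n :=
      fun y hy => hlen₂ ▸ ih (fun s hs h => hv s hs
        ((cs).isLeftDescent_of_isLeftDescent_mul_simple hc (by rwa [coxeterSystem_simple, hv₂])))
        hy hlen₂
    rcases (cs).length_mul_simple (y * v₂) c with h | h <;> rw [coxeterSystem_simple] at h
    · rw [hn, hvv₂, ← mul_assoc, h, ih₂ y hy]
      ring
    exfalso
    rcases isRightDescent_or_exists_mem_of_isRightDescent_mul G hy v₂ (c := c)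
      (by rw [IsRightDescent, coxeterSystem_simple]; omega) with h' | ⟨r, hrS, hr⟩
    · rw [IsRightDescent, coxeterSystem_simple, ← hvv₂, hn, hlen₂] at h'
      omega
    · rw [← hvv₂] at hr
      obtain ⟨s, hs, rfl⟩ := exists_eq_racgGen_of_length_eq_one G hrS
        (by have := ih₂ r hrS; rw [← hr, hn] at this; omega)
      refine hv s hs ?_
      rw [IsLeftDescent, coxeterSystem_simple, hn, hr, ← mul_assoc, racgGen_sq, one_mul, hlen₂]
      omega

lemma exists_mul_forall_not_isLeftDescent (S : Set V) (u : RACG G) :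
    ∃ x ∈ specialSubgroup G S, ∃ v, u = x * v ∧ ∀ s ∈ S, ¬ (cs).IsLeftDescent v s := by
  classical
  have hex : ∃ n, ∃ y ∈ specialSubgroup G S, (cs).length (y * u) = n := ⟨_, 1, one_mem _, rfl⟩
  obtain ⟨y, hy, hmin⟩ := Nat.find_spec hex
  refine ⟨y⁻¹, inv_mem hy, y * u, by group, fun s hs hdesc => ?_⟩
  have := Nat.find_min' hex
    ⟨racgGen G s * y, mul_mem (racgGen_mem_specialSubgroup G hs) hy, rfl⟩
  rw [IsLeftDescent, hmin, coxeterSystem_simple, ← mul_assoc] at hdesc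
  omega

theorem adj_of_isLeftDescent {a c : V} (hne : a ≠ c) {u : RACG G}
    (ha : (cs).IsLeftDescent u a) (hc : (cs).IsLeftDescent u c) : G.Adj a c := by
  by_contra hac
  obtain ⟨x, hx, v, rfl, hv⟩ := exists_mul_forall_not_isLeftDescent G {a, c} u
  have hdesc : ∀ s ∈ ({a, c} : Set V), (cs).IsLeftDescent (x * v) s → (cs).IsLeftDescent x s := by
    intro s hs h
    have h₁ := length_mul_of_forall_not_isLeftDescent G hv hx
    have h₂ := length_mul_of_forall_not_isLeftDescent G hv
      (mul_mem (racgGen_mem_specialSubgroup G hs) hx)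
    rw [IsLeftDescent, coxeterSystem_simple, ← mul_assoc, h₁, h₂] at h
    rw [IsLeftDescent, coxeterSystem_simple]
    omega
  exact not_isLeftDescent_and_isLeftDescent G hac hne hx
    ⟨hdesc a (by simp) ha, hdesc c (by simp) hc⟩

lemma eq_or_adj_of_commute_of_isLeftDescent {a c : V} {z : RACG G}
    (hz : Commute (racgGen G a) z) (hc : (cs).IsLeftDescent z c) : c = a ∨ G.Adj a c := by
  by_contra! h
  by_cases ha : (cs).IsLeftDescent z a
  · exact h.2 (adj_of_isLeftDescent G h.1.symm ha hc)
  have hlen : (cs).length (racgGen G a * z) = (cs).length z + 1 := by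
    have := (cs).length_simple_mul z a
    simp only [IsLeftDescent, coxeterSystem_simple] at ha this
    omega
  refine h.2 (adj_of_isLeftDescent G h.1.symm (u := racgGen G a * z) ?_ ?_)
  · rw [IsLeftDescent, coxeterSystem_simple, ← mul_assoc, racgGen_sq, one_mul, hlen]
    omega
  · have := (cs).length_mul_simple (racgGen G c * z) a
    simp only [IsLeftDescent, coxeterSystem_simple] at hc this ⊢
    rw [hz.eq, ← mul_assoc, ← hz.eq, hlen]
    omega

theorem mem_specialSubgroup_of_commute {a : V} {z : RACG G} (hz : Commute (racgGen G a) z) :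
    z ∈ specialSubgroup G (insert a (G.neighborSet a)) := by
  obtain ⟨n, hn⟩ : ∃ n, (cs).length z = n := ⟨_, rfl⟩
  induction n generalizing z with
  | zero => simp [(cs).length_eq_zero_iff.mp hn, one_mem]
  | succ n ih =>
    obtain ⟨c, hc⟩ := (cs).exists_leftDescent_of_ne_one (w := z) (by rintro rfl; simp at hn)
    have hca : c ∈ insert a (G.neighborSet a) := eq_or_adj_of_commute_of_isLeftDescent G hz hc
    have hac : Commute (racgGen G a) (racgGen G c) := by
      rcases hca with rfl | hac
      exacts [Commute.refl _, commute_racgGen G hac]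
    have hcz := ih (hac.mul_right hz) (by
      have := (cs).isLeftDescent_iff.mp hc
      rw [coxeterSystem_simple] at this
      omega)
    simpa [← mul_assoc, racgGen_sq] using mul_mem (racgGen_mem_specialSubgroup G hca) hcz

theorem mem_specialSubgroup_of_conj_mem {S : Set V} {a : V} (ha : a ∈ S) {x : RACG G}
    (hx : x⁻¹ * racgGen G a * x ∈ specialSubgroup G S) :
    x ∈ specialSubgroup G (insert a (G.neighborSet a) ∪ S) := by
  set r := retraction G S x
  have hconj : x⁻¹ * racgGen G a * x = r⁻¹ * racgGen G a * r := by
    simpa [r, retraction_racgGen, ha] using (retraction_eq_self G hx).symm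
  have hcomm : Commute (racgGen G a) (x * r⁻¹) :=
    calc racgGen G a * (x * r⁻¹) = x * (x⁻¹ * racgGen G a * x) * r⁻¹ := by group
      _ = x * r⁻¹ * racgGen G a := by rw [hconj]; group
  rw [show x = x * r⁻¹ * r by group]
  exact mul_mem
    (specialSubgroup_mono G Set.subset_union_left (mem_specialSubgroup_of_commute G hcomm))
    (specialSubgroup_mono G Set.subset_union_right (retraction_mem_specialSubgroup G S x))

theorem eq_one_of_forall_conj_mem {Λ : Set V} {x : RACG G}
    (hx : ∀ a ∈ Λ, x⁻¹ * racgGen G a * x ∈ specialSubgroup G (Λ ∪ linkSet G Λ))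
    (hend : ∀ b ∈ Λ ∪ linkSet G Λ, ¬ (cs).IsRightDescent x b) : x = 1 := by
  by_contra hne
  obtain ⟨b, hb⟩ := (cs).exists_rightDescent_of_ne_one hne
  have hbT : b ∉ Λ ∪ linkSet G Λ := fun hbT => hend b hbT hb
  refine hbT (Or.inr fun a ha => ?_)
  rcases mem_of_isRightDescent G (mem_specialSubgroup_of_conj_mem G (Or.inl ha) (hx a ha)) hb
    with (rfl | hab) | hbT'
  exacts [absurd (Or.inl ha) hbT, hab.symm, absurd hbT' hbT]

end RACG

open RACG CoxeterSystem in
theorem racg_conjugating_element_in_special_subgroup_general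
    {V : Type*} (G : SimpleGraph V) (Λ : Set V) (g g₁ g₂ g₃ : RACG G)
    (hconj : specialSubgroup G Λ ≤
      Subgroup.map (MulAut.conj g).toMonoidHom (specialSubgroup G (Λ ∪ linkSet G Λ)))
    (hg : g = g₁ * g₂ * g₃)
    (hg₁ : g₁ ∈ specialSubgroup G Λ)
    (hg₃ : g₃ ∈ specialSubgroup G (Λ ∪ linkSet G Λ))
    (hend : ∀ a ∈ Λ ∪ linkSet G Λ, ¬ wordLength G (g₂ * racgGen G a) < wordLength G g₂) :
    g₂ ∈ specialSubgroup G (linkSet G (Λ ∪ linkSet G Λ)) ∧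
      g ∈ specialSubgroup G (Λ ∪ linkSet G Λ) := by
  have hg₂ : g₂ = 1 := eq_one_of_forall_conj_mem G
    (fun a ha => Subgroup.conj_mem_of_le_map_conj hconj hg hg₁ hg₃
      (racgGen_mem_specialSubgroup G ha))
    (fun b hb => by simpa [IsRightDescent, wordLength_eq_length] using hend b hb)
  subst hg₂
  refine ⟨one_mem _, ?_⟩
  rw [hg, mul_one]
  exact mul_mem (specialSubgroup_mono G Set.subset_union_left hg₁) hg₃

/-- If `g W_{Λ ∪ Link Λ} g⁻¹ ⊇ W_Λ` and `g = g₁ g₂ g₃` with `g₁ ∈ W_Λ`,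
`g₃ ∈ W_{Λ ∪ Link Λ}`, `g₂` having no letters from `Λ` at the start and no letters from
`Λ ∪ Link Λ` at the end, then `g₂ ∈ W_{Link(Λ ∪ Link Λ)}` and `g ∈ W_{Λ ∪ Link Λ}`. -/
theorem racg_conjugating_element_in_special_subgroup
    {V : Type*} [Fintype V] (G : SimpleGraph V) (Λ : Set V) (g g₁ g₂ g₃ : RACG G)
    (hconj : specialSubgroup G Λ ≤
      Subgroup.map (MulAut.conj g).toMonoidHom (specialSubgroup G (Λ ∪ linkSet G Λ)))
    (hg : g = g₁ * g₂ * g₃)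
    (hg₁ : g₁ ∈ specialSubgroup G Λ)
    (hg₃ : g₃ ∈ specialSubgroup G (Λ ∪ linkSet G Λ))
    (hstart : ∀ a ∈ Λ, ¬ wordLength G (racgGen G a * g₂) < wordLength G g₂)
    (hend : ∀ a ∈ Λ ∪ linkSet G Λ, ¬ wordLength G (g₂ * racgGen G a) < wordLength G g₂) :
    g₂ ∈ specialSubgroup G (linkSet G (Λ ∪ linkSet G Λ)) ∧
      g ∈ specialSubgroup G (Λ ∪ linkSet G Λ) :=
  racg_conjugating_element_in_special_subgroup_general G Λ g g₁ g₂ g₃ hconj hg hg₁ hg₃ hend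
end

section
/- Let Γ be a finite simple graph not containing K_{2,3} or K_{2,3}⁺ as an induced subgraph, and suppose there is an induced subgraph Λ ⊆ Γ containing two non-adjacent vertices such that Λ ∪ Link(Λ) = Γ. Then for any vertex v ∈ Link(Λ), the set Γ \ Star(v) contains at most one vertex. -/
/-- The complete bipartite graph `K_{2,3}` with parts `Fin 2` and `Fin 3`. -/
def K23 : SimpleGraph (Fin 2 ⊕ Fin 3) where
  Adj x y := (x.isLeft ∧ y.isRight) ∨ (x.isRight ∧ y.isLeft)
  symm := ⟨by intro x y; revert x y; decide⟩
  loopless := ⟨by intro x; revert x; decide⟩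

/-- `K_{2,3}⁺`: the graph `K_{2,3}` with one extra edge joining `b₁ = inr 0` and
`b₂ = inr 1` in the size-3 part. -/
def K23plus : SimpleGraph (Fin 2 ⊕ Fin 3) where
  Adj x y := (x.isLeft ∧ y.isRight) ∨ (x.isRight ∧ y.isLeft) ∨
    (x = Sum.inr 0 ∧ y = Sum.inr 1) ∨ (x = Sum.inr 1 ∧ y = Sum.inr 0)
  symm := ⟨by intro x y; revert x y; decide⟩
  loopless := ⟨by intro x; revert x; decide⟩

/-- `G` contains `Hg` as an induced subgraph. -/
def ContainsInduced {α V : Type*} (Hg : SimpleGraph α) (G : SimpleGraph V) : Prop :=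
  ∃ f : α → V, Function.Injective f ∧ ∀ a b, G.Adj (f a) (f b) ↔ Hg.Adj a b

/-- The group of order two, written multiplicatively. -/
abbrev Z2 : Type := Multiplicative (ZMod 2)

/-
If `x, y ∈ Γ ∖ Star(v)` are distinct, then `x, y ∉ Λ` since `v` is adjacent to all of `Λ`,
so `x, y ∈ Link(Λ)`. Hence two non-adjacent vertices `a, b ∈ Λ` are both adjacent to each of
`x, y, v`, while `v` is adjacent to neither `x` nor `y`: these five vertices span an induced
`K_{2,3}` or, if `x` and `y` are adjacent, an induced `K_{2,3}⁺`.
-/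

section

variable {V : Type*} {G : SimpleGraph V}

theorem linkSet_anti {S T : Set V} (h : S ⊆ T) : linkSet G T ⊆ linkSet G S :=
  fun _ hu s hs => hu s (h hs)

theorem mem_linkSet_pair {a b x : V} : x ∈ linkSet G {a, b} ↔ G.Adj x a ∧ G.Adj x b := by
  simp [linkSet]

theorem mem_linkSet_of_not_adj {Λ : Set V} (hcover : Λ ∪ linkSet G Λ = Set.univ) {v u : V}
    (hv : v ∈ linkSet G Λ) (hvu : ¬ G.Adj v u) : u ∈ linkSet G Λ :=
  (hcover ▸ Set.mem_univ u : u ∈ Λ ∪ linkSet G Λ).resolve_left fun hu => hvu (hv u hu)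

variable {a b x y z : V}

theorem injective_sumElim_of_mem_linkSet (hab : a ≠ b) (hx : x ∈ linkSet G {a, b})
    (hy : y ∈ linkSet G {a, b}) (hz : z ∈ linkSet G {a, b})
    (hxy : x ≠ y) (hxz : x ≠ z) (hyz : y ≠ z) :
    Function.Injective (Sum.elim ![a, b] ![x, y, z]) := by
  rw [mem_linkSet_pair] at hx hy hz
  rintro (i | i) (j | j) h <;> fin_cases i <;> fin_cases j <;> simp_all [G.ne_of_adj]

theorem containsInduced_K23_of_mem_linkSet (hab : a ≠ b) (hnab : ¬ G.Adj a b)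
    (hx : x ∈ linkSet G {a, b}) (hy : y ∈ linkSet G {a, b}) (hz : z ∈ linkSet G {a, b})
    (hxy : x ≠ y) (hxz : x ≠ z) (hyz : y ≠ z)
    (hnxy : ¬ G.Adj x y) (hzx : ¬ G.Adj z x) (hzy : ¬ G.Adj z y) :
    ContainsInduced K23 G := by
  refine ⟨_, injective_sumElim_of_mem_linkSet hab hx hy hz hxy hxz hyz, ?_⟩
  rw [mem_linkSet_pair] at hx hy hz
  rintro (i | i) (j | j) <;> fin_cases i <;> fin_cases j <;> simp_all [K23, G.adj_comm]

theorem containsInduced_K23plus_of_mem_linkSet (hab : a ≠ b) (hnab : ¬ G.Adj a b)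
    (hx : x ∈ linkSet G {a, b}) (hy : y ∈ linkSet G {a, b}) (hz : z ∈ linkSet G {a, b})
    (hxy : x ≠ y) (hxz : x ≠ z) (hyz : y ≠ z)
    (hadj : G.Adj x y) (hzx : ¬ G.Adj z x) (hzy : ¬ G.Adj z y) :
    ContainsInduced K23plus G := by
  refine ⟨_, injective_sumElim_of_mem_linkSet hab hx hy hz hxy hxz hyz, ?_⟩
  rw [mem_linkSet_pair] at hx hy hz
  rintro (i | i) (j | j) <;> fin_cases i <;> fin_cases j <;> simp_all [K23plus, G.adj_comm]

end

theorem costar_subsingleton_of_no_K23_general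
    {V : Type*} (G : SimpleGraph V)
    (hK : ¬ ContainsInduced K23 G) (hKplus : ¬ ContainsInduced K23plus G)
    (Λ : Set V)
    (hnonadj : ∃ a ∈ Λ, ∃ b ∈ Λ, a ≠ b ∧ ¬ G.Adj a b)
    (hcover : Λ ∪ linkSet G Λ = Set.univ) :
    ∀ v ∈ linkSet G Λ, {u : V | u ≠ v ∧ ¬ G.Adj v u}.Subsingleton := by
  rintro v hv x ⟨hxv, hvx⟩ y ⟨hyv, hvy⟩
  by_contra hxy
  obtain ⟨a, ha, b, hb, hab, hnab⟩ := hnonadj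
  have hlink : linkSet G Λ ⊆ linkSet G {a, b} :=
    linkSet_anti (Set.insert_subset ha (Set.singleton_subset_iff.mpr hb))
  have hx := hlink (mem_linkSet_of_not_adj hcover hv hvx)
  have hy := hlink (mem_linkSet_of_not_adj hcover hv hvy)
  by_cases hadj : G.Adj x y
  · exact hKplus <| containsInduced_K23plus_of_mem_linkSet hab hnab hx hy (hlink hv)
      hxy hxv hyv hadj hvx hvy
  · exact hK <| containsInduced_K23_of_mem_linkSet hab hnab hx hy (hlink hv)
      hxy hxv hyv hadj hvx hvy

/-- If `Γ` contains neither `K_{2,3}` nor `K_{2,3}⁺` as an induced subgraph, `Λ`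
contains two non-adjacent vertices and `Λ ∪ Link(Λ) = Γ`, then for every
`v ∈ Link(Λ)` the complement of `Star(v)` has at most one vertex. -/
theorem costar_subsingleton_of_no_K23
    {V : Type*} [Fintype V] (G : SimpleGraph V)
    (hK : ¬ ContainsInduced K23 G) (hKplus : ¬ ContainsInduced K23plus G)
    (Λ : Set V)
    (hnonadj : ∃ a ∈ Λ, ∃ b ∈ Λ, a ≠ b ∧ ¬ G.Adj a b)
    (hcover : Λ ∪ linkSet G Λ = Set.univ) :
    ∀ v ∈ linkSet G Λ, {u : V | u ≠ v ∧ ¬ G.Adj v u}.Subsingleton :=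
  costar_subsingleton_of_no_K23_general G hK hKplus Λ hnonadj hcover
end
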